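/- Sum-of-squares identity for line parameter estimation: let b be the parent of a non-root node a, with edge resistance r_{ab} and reactance x_{ab}. Then W_ε(a,b) + W_θ(a,b) = (r_{ab}² + x_{ab}²) · Σ_{c ∈ D_a} (σp(c) + σq(c)). -/
import Mathlib


open Finset
open Classical

/-- A finite rooted tree, encoded by its root and parent map: every node reaches
the root by iterating `parent`, and the root is a fixed point of `parent`.
Each non-root node `v` is identified with the edge `(v, parent v)`, so that
edge weights are functions on non-root nodes. -/
structure DistTree (V : Type) [Fintype V] [DecidableEq V] where
  root : V
  parent : V → V
  parent_root : parent root = root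
  reaches_root : ∀ v : V, ∃ n : ℕ, parent^[n] v = root

namespace DistTree

variable {V : Type} [Fintype V] [DecidableEq V]

/-- `a` is a descendant of `b` (i.e. `a ∈ D_b`): `b` lies on the path from `a`
to the root.  Every node is a descendant of itself. -/
def Desc (T : DistTree V) (a b : V) : Prop := ∃ n : ℕ, T.parent^[n] a = b

/-- `b` is the parent of the (non-root) node `a`: `(a,b)` is an edge of the tree
and `b` lies on the path from `a` to the root. -/
def IsParent (T : DistTree V) (b a : V) : Prop := a ≠ T.root ∧ T.parent a = b

/-- `T.pathSum w a b = Σ_{e ∈ P(a) ∩ P(b)} w_e` : the sum of the edge weights `w`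
over the edges common to the path from `a` to the root and the path from `b` to
the root.  An edge `(v, parent v)` (indexed by the non-root node `v`) lies on
`P(a)` iff `a` is a descendant of `v`. -/
noncomputable def pathSum (T : DistTree V) (w : V → ℝ) (a b : V) : ℝ :=
  ∑ v : V, if v ≠ T.root ∧ T.Desc a v ∧ T.Desc b v then w v else 0

end DistTree

/-- `W_ε(a,b) := Σ_{c ≠ 0} [(R(a,c)−R(b,c))² σp(c) + (X(a,c)−X(b,c))² σq(c)
+ 2 (R(a,c)−R(b,c)) (X(a,c)−X(b,c)) σpq(c)]`: the expected squared centered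
difference of voltage-magnitude deviations between `a` and `b` (LC-PF model). -/
noncomputable def Weps {V : Type} [Fintype V] [DecidableEq V]
    (T : DistTree V) (r x σp σq σpq : V → ℝ) (a b : V) : ℝ :=
  ∑ c : V, if c ≠ T.root then
      (T.pathSum r a c - T.pathSum r b c) ^ 2 * σp c
        + (T.pathSum x a c - T.pathSum x b c) ^ 2 * σq c
        + 2 * (T.pathSum r a c - T.pathSum r b c)
            * (T.pathSum x a c - T.pathSum x b c) * σpq c
    else 0

/-- `W_θ(a,b) := Σ_{c ≠ 0} [(X(a,c)−X(b,c))² σp(c) + (R(a,c)−R(b,c))² σq(c)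
− 2 (R(a,c)−R(b,c)) (X(a,c)−X(b,c)) σpq(c)]`: the expected squared centered
difference of voltage phase angles between `a` and `b` (LC-PF model). -/
noncomputable def Wtheta {V : Type} [Fintype V] [DecidableEq V]
    (T : DistTree V) (r x σp σq σpq : V → ℝ) (a b : V) : ℝ :=
  ∑ c : V, if c ≠ T.root then
      (T.pathSum x a c - T.pathSum x b c) ^ 2 * σp c
        + (T.pathSum r a c - T.pathSum r b c) ^ 2 * σq c
        - 2 * (T.pathSum r a c - T.pathSum r b c)
            * (T.pathSum x a c - T.pathSum x b c) * σpq c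
    else 0

/-- `W_{εθ}(a,b) := Σ_{c ≠ 0} [(R(a,c)−R(b,c)) (X(a,c)−X(b,c)) (σp(c) − σq(c))
+ ((X(a,c)−X(b,c))² − (R(a,c)−R(b,c))²) σpq(c)]`: the expected product of the
centered differences of voltage-magnitude deviations and phase angles between
`a` and `b` (LC-PF model). -/
noncomputable def WepsTheta {V : Type} [Fintype V] [DecidableEq V]
    (T : DistTree V) (r x σp σq σpq : V → ℝ) (a b : V) : ℝ :=
  ∑ c : V, if c ≠ T.root then
      (T.pathSum r a c - T.pathSum r b c) * (T.pathSum x a c - T.pathSum x b c)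
          * (σp c - σq c)
        + ((T.pathSum x a c - T.pathSum x b c) ^ 2
            - (T.pathSum r a c - T.pathSum r b c) ^ 2) * σpq c
    else 0

section Aux

variable {V : Type} [Fintype V] [DecidableEq V]

lemma desc_succ (T : DistTree V) (a v : V) :
    T.Desc a v ↔ v = a ∨ T.Desc (T.parent a) v := by
  constructor
  · rintro ⟨n, hn⟩
    cases n with
    | zero => exact Or.inl hn.symm
    | succ k =>
        right; exact ⟨k, by rwa [Function.iterate_succ_apply] at hn⟩
  · rintro (rfl | ⟨n, hn⟩)
    · exact ⟨0, rfl⟩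
    · exact ⟨n + 1, by rwa [Function.iterate_succ_apply]⟩

lemma desc_root (T : DistTree V) {v : V} (h : T.Desc T.root v) : v = T.root := by
  obtain ⟨n, hn⟩ := h
  rw [Function.iterate_fixed T.parent_root] at hn
  exact hn.symm

lemma not_desc_parent (T : DistTree V) {a : V} (ha : a ≠ T.root) :
    ¬ T.Desc (T.parent a) a := by
  rintro ⟨n, hn⟩
  have hper : T.parent^[n + 1] a = a := by
    rw [Function.iterate_succ_apply]; exact hn
  obtain ⟨m, hm⟩ := T.reaches_root a
  have hk : ∀ t, T.parent^[(n + 1) * t] a = a := by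
    intro t
    induction t with
    | zero => simp
    | succ s ih =>
        rw [Nat.mul_succ, Function.iterate_add_apply, hper, ih]
  have hle : m ≤ (n + 1) * (m + 1) :=
    le_trans (Nat.le_succ m) (Nat.le_mul_of_pos_left (m + 1) (Nat.succ_pos n))
  have hd : (n + 1) * (m + 1) = ((n + 1) * (m + 1) - m) + m :=
    (Nat.sub_add_cancel hle).symm
  have : a = T.root := by
    conv_lhs => rw [← hk (m + 1)]
    rw [hd, Function.iterate_add_apply, hm,
      Function.iterate_fixed T.parent_root]
  exact ha this

lemma pathSum_diff (T : DistTree V) (w : V → ℝ) {a b : V}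
    (hab : T.IsParent b a) (c : V) :
    T.pathSum w a c - T.pathSum w b c = if T.Desc c a then w a else 0 := by
  obtain ⟨ha, hpa⟩ := hab
  unfold DistTree.pathSum
  rw [← Finset.sum_sub_distrib]
  have key : ∀ v : V,
      ((if v ≠ T.root ∧ T.Desc a v ∧ T.Desc c v then w v else 0)
        - (if v ≠ T.root ∧ T.Desc b v ∧ T.Desc c v then w v else 0))
      = if v = a then (if T.Desc c a then w a else 0) else 0 := by
    intro v
    by_cases hv : v = a
    · subst hv
      have h1 : T.Desc v v := ⟨0, rfl⟩
      have h2 : ¬ T.Desc b v := hpa ▸ not_desc_parent T ha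
      by_cases hc : T.Desc c v <;> simp [ha, h1, h2, hc]
    · have heq : T.Desc a v ↔ T.Desc b v := by
        rw [desc_succ T a v, hpa]
        simp [fun h : v = a => hv h]
      simp [hv, heq]
  rw [Finset.sum_congr rfl (fun v _ => key v)]
  simp

end Aux

/-- Sum-of-squares identity for line parameter estimation: if
`b` is the parent of the non-root node `a`, with edge resistance `r_{ab}` and
reactance `x_{ab}`, then
`W_ε(a,b) + W_θ(a,b) = (r_{ab}² + x_{ab}²) · Σ_{c ∈ D_a} (σp(c) + σq(c))`. -/
theorem Weps_add_Wtheta_parent_edge {V : Type} [Fintype V] [DecidableEq V]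
    (T : DistTree V) (r x σp σq σpq : V → ℝ)
    (hr : ∀ v, v ≠ T.root → 0 < r v) (hx : ∀ v, v ≠ T.root → 0 < x v)
    (hσp : ∀ v, v ≠ T.root → 0 < σp v) (hσq : ∀ v, v ≠ T.root → 0 < σq v)
    (hσpq : ∀ v, v ≠ T.root → 0 < σpq v)
    (a b : V) (hab : T.IsParent b a) :
    Weps T r x σp σq σpq a b + Wtheta T r x σp σq σpq a b =
      ((r a) ^ 2 + (x a) ^ 2) * ∑ c : V, (if T.Desc c a then σp c + σq c else 0) := by
  unfold Weps Wtheta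
  rw [← Finset.sum_add_distrib, Finset.mul_sum]
  refine Finset.sum_congr rfl (fun c _ => ?_)
  have hR := pathSum_diff T r hab c
  have hX := pathSum_diff T x hab c
  by_cases hc : c = T.root
  · subst hc
    have hda : ¬ T.Desc T.root a := fun h => hab.1 (desc_root T h)
    simp [hda]
  · rw [if_pos hc, if_pos hc, hR, hX]
    by_cases hd : T.Desc c a
    · simp only [if_pos hd]; ring
    · simp [hd]
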